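/- Let a > 0 and k ∈ ℕ, and let f_k^{(a)}(x) = e^{−a/2} √(a^{x+k}/(x!·k!)) · C_k^{(a)}(x) be the k-th Charlier function. Then for every z ∈ ℂ, Σ_{x∈ℕ} f_k^{(a)}(x) z^x/√(x!) = e^{√a·z − a/2} (√a − z)^k/√(k!). In particular, the Charlier transform maps the Charlier functions to polynomials in z times a fixed nonvanishing entire function. -/

import Mathlib

open Real Nat

/-- The Charlier polynomial of parameter `a > 0`:
`C_k^{(a)}(x) = Σ_{j=0}^{k} binom(k,j)·binom(x,j)·j!·(−1/a)^j` for `x ∈ ℕ`. -/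
noncomputable def charlier (a : ℝ) (k x : ℕ) : ℝ :=
  ∑ j ∈ Finset.range (k + 1),
    (k.choose j : ℝ) * (x.choose j : ℝ) * (j ! : ℝ) * (-1 / a) ^ j

/-- The `k`-th Charlier function `f_k^{(a)}(x) = e^{−a/2} √(a^{x+k}/(x!·k!)) · C_k^{(a)}(x)`. -/
noncomputable def charlierFun (a : ℝ) (k x : ℕ) : ℝ :=
  Real.exp (-a / 2) * Real.sqrt (a ^ (x + k) / ((x ! : ℝ) * (k ! : ℝ))) * charlier a k x

/-! Expanding `C_k^{(a)}(x)` and summing over `x` first, the exponential series gives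
`Σ_x binom(x,j) w^x/x! = w^j e^w/j!`, so the binomial theorem turns the Charlier polynomials
into the generating function `Σ_x C_k^{(a)}(x) w^x/x! = e^w (1 - w/a)^k`. With `w = √a·z` the
normalisation `√(a^{x+k}/(x!·k!))` of `f_k^{(a)}` contributes exactly the factor
`√a^k/√(k!)`, and `√a^k (1 - z/√a)^k = (√a - z)^k`. -/

open Complex in
theorem hasSum_choose_mul_pow_div_factorial (w : ℂ) (j : ℕ) :
    HasSum (fun x : ℕ => (x.choose j : ℂ) * w ^ x / x !) (w ^ j / j ! * exp w) := by
  have hexp : HasSum (fun n : ℕ => w ^ n / n !) (exp w) := by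
    rw [exp_eq_exp_ℂ]
    exact NormedSpace.expSeries_div_hasSum_exp w
  refine (hasSum_nat_add_iff' j).1 ?_
  rw [Finset.sum_eq_zero fun i hi => by
    simp [Nat.choose_eq_zero_of_lt (Finset.mem_range.1 hi)], sub_zero]
  refine (hexp.mul_left (w ^ j / j !)).congr_fun fun n => ?_
  have hfact : ((n + j).choose j : ℂ) * n ! * j ! = (n + j)! := by
    exact_mod_cast Nat.add_choose_mul_factorial_mul_factorial n j
  have hchoose : ((n + j).choose j : ℂ) ≠ 0 := by
    exact_mod_cast (Nat.choose_pos (Nat.le_add_left j n)).ne'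
  rw [← hfact, pow_add]
  field_simp

theorem hasSum_charlier_mul_pow_div_factorial (a : ℝ) (k : ℕ) (w : ℂ) :
    HasSum (fun x : ℕ => (charlier a k x : ℂ) * w ^ x / x !)
      (Complex.exp w * (1 - w / a) ^ k) := by
  have hterm : ∀ x : ℕ, (charlier a k x : ℂ) * w ^ x / x ! = ∑ j ∈ Finset.range (k + 1),
      (k.choose j * j ! * (-1 / a) ^ j : ℂ) * ((x.choose j : ℂ) * w ^ x / x !) := by
    intro x
    simp only [charlier, Complex.ofReal_sum, Finset.sum_mul, Finset.sum_div]
    push_cast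
    exact Finset.sum_congr rfl fun j _ => by ring
  have hvalue : ∑ j ∈ Finset.range (k + 1),
      (k.choose j * j ! * (-1 / a) ^ j : ℂ) * (w ^ j / j ! * Complex.exp w)
        = Complex.exp w * (1 - w / a) ^ k := by
    rw [sub_eq_neg_add, add_pow, Finset.mul_sum]
    refine Finset.sum_congr rfl fun j _ => ?_
    have hj : (j ! : ℂ) ≠ 0 := by exact_mod_cast j.factorial_ne_zero
    field_simp
    ring
  rw [funext hterm, ← hvalue]
  exact hasSum_sum fun j _ => (hasSum_choose_mul_pow_div_factorial w j).mul_left _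

theorem charlierFun_eq (a : ℝ) (ha : 0 ≤ a) (k x : ℕ) : charlierFun a k x =
    Real.exp (-a / 2) * (√a ^ (x + k) / (√(x ! : ℝ) * √(k ! : ℝ))) * charlier a k x := by
  have hpow : √(a ^ (x + k)) = √a ^ (x + k) := by
    rw [← Real.sqrt_sq (by positivity : 0 ≤ √a ^ (x + k)), pow_right_comm, Real.sq_sqrt ha]
  rw [charlierFun, Real.sqrt_div (pow_nonneg ha _), Real.sqrt_mul (by positivity), hpow]

theorem charlierFun_mul_pow_div_sqrt_factorial (a : ℝ) (ha : 0 ≤ a) (k x : ℕ) (z : ℂ) :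
    (charlierFun a k x : ℂ) * z ^ x / (√(x ! : ℝ) : ℝ) =
      Real.exp (-a / 2) * (√a : ℝ) ^ k / (√(k ! : ℝ) : ℝ) *
        ((charlier a k x : ℂ) * ((√a : ℝ) * z) ^ x / x !) := by
  have hx : ((√(x ! : ℝ) : ℝ) : ℂ) ^ 2 = x ! := by exact_mod_cast Real.sq_sqrt (by positivity)
  rw [charlierFun_eq a ha, ← hx]
  push_cast
  field_simp
  ring

/-- The Charlier transform of the `k`-th Charlier function:
`Σ_{x∈ℕ} f_k^{(a)}(x) z^x/√(x!) = e^{√a·z − a/2} (√a − z)^k/√(k!)` for all `z ∈ ℂ`. -/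
theorem charlierTransform_charlierFun (a : ℝ) (ha : 0 < a) (k : ℕ) (z : ℂ) :
    HasSum (fun x : ℕ => ((charlierFun a k x : ℝ) : ℂ) * z ^ x / ((Real.sqrt (x ! : ℝ) : ℝ) : ℂ))
      (Complex.exp ((Real.sqrt a : ℂ) * z - (a : ℂ) / 2) * ((Real.sqrt a : ℂ) - z) ^ k /
        ((Real.sqrt (k ! : ℝ) : ℝ) : ℂ)) := by
  have hsq : ((√a : ℝ) : ℂ) ^ 2 = a := by exact_mod_cast Real.sq_sqrt ha.le
  have hs : ((√a : ℝ) : ℂ) ≠ 0 := by exact_mod_cast (Real.sqrt_pos.2 ha).ne'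
  have hbin : ((√a : ℝ) : ℂ) ^ k * (1 - (√a : ℝ) * z / a) ^ k = ((√a : ℝ) - z) ^ k := by
    rw [← mul_pow, ← hsq]
    field_simp
  have hvalue : Real.exp (-a / 2) * (√a : ℝ) ^ k / (√(k ! : ℝ) : ℝ) *
      (Complex.exp ((√a : ℝ) * z) * (1 - (√a : ℝ) * z / a) ^ k) =
      Complex.exp ((Real.sqrt a : ℂ) * z - (a : ℂ) / 2) * ((Real.sqrt a : ℂ) - z) ^ k /
        ((Real.sqrt (k ! : ℝ) : ℝ) : ℂ) := by
    rw [Complex.ofReal_exp, sub_eq_add_neg (_ * z), Complex.exp_add, ← hbin]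
    push_cast [neg_div]
    ring
  simp_rw [charlierFun_mul_pow_div_sqrt_factorial a ha.le k, ← hvalue]
  exact (hasSum_charlier_mul_pow_div_factorial a k _).mul_left _
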